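/- arXiv:2204.00038 — 6 statements merged into one kernel-verified Lean document; each statement's English description precedes it below -/
import Mathlib

section
/- Let n ≥ 1, α ∈ ℝⁿ with αᵢ > 0 for all i, and β ∈ ℝⁿ with 0 < βᵢ < 1 for all i. Define ᾱᵢ = √(αᵢ/∑ⱼ αⱼ), β̄ᵢ = √βᵢ, C = diag(ᾱ) diag(β̄)⁻¹, and ζᵢ = ᾱᵢ β̄ᵢ. Then C⁻¹ (diag(β) - 2αβᵀ/∑ⱼαⱼ) C = diag(β) - 2 ζζᵀ and C⁻¹ (diag(β) - αβᵀ/∑ⱼαⱼ) C = diag(β) - ζζᵀ; in particular both conjugated matrices are symmetric. -/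
/-!
`C` is the diagonal matrix `diag(ᾱ/β̄)`. Conjugating by a diagonal `D` fixes `diag(β)` and turns
`αβᵀ` into `(D⁻¹α)(βD)ᵀ`; for `D = C` one has `D⁻¹α = (∑ⱼ αⱼ) ζ` and `βD = ζ`, because
`αᵢ = (∑ⱼ αⱼ) ᾱᵢ²` and `βᵢ = β̄ᵢ²`.
-/

open Matrix

namespace Matrix

variable {ι : Type*} [DecidableEq ι]

theorem isSymm_diagonal_sub_smul_vecMulVec_self {R : Type*} [CommRing R] (w u : ι → R) (s : R) :
    (diagonal w - s • vecMulVec u u).IsSymm :=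
  (isSymm_diagonal w).sub (IsSymm.smul (transpose_vecMulVec u u) s)

variable [Fintype ι] {K : Type*} [Field K]

theorem inv_diagonal_of_ne_zero {d : ι → K} (hd : ∀ i, d i ≠ 0) :
    (diagonal d)⁻¹ = diagonal d⁻¹ := by
  refine inv_eq_left_inv ?_
  rw [diagonal_mul_diagonal, ← diagonal_one]
  exact congrArg diagonal (funext fun i => inv_mul_cancel₀ (hd i))

theorem inv_diagonal_mul_diagonal_sub_smul_vecMulVec_mul_diagonal {d : ι → K}
    (hd : ∀ i, d i ≠ 0) (w u v : ι → K) (s : K) :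
    (diagonal d)⁻¹ * (diagonal w - s • vecMulVec u v) * diagonal d
      = diagonal w - s • vecMulVec (d⁻¹ * u) (v * d) := by
  rw [inv_diagonal_of_ne_zero hd]
  ext i j
  simp only [mul_diagonal, diagonal_mul, sub_apply, smul_apply, diagonal_apply, vecMulVec_apply,
    Pi.mul_apply, Pi.inv_apply, smul_eq_mul]
  split_ifs with hij
  · subst hij
    field_simp [hd i]
  · ring

end Matrix

theorem stmt1 (n : ℕ) (hn : 0 < n) (α β : Fin n → ℝ)
    (hα : ∀ i, 0 < α i) (hβ : ∀ i, 0 < β i ∧ β i < 1)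
    (abar : Fin n → ℝ) (habar : ∀ i, abar i = Real.sqrt (α i / ∑ j, α j))
    (bbar : Fin n → ℝ) (hbbar : ∀ i, bbar i = Real.sqrt (β i))
    (C : Matrix (Fin n) (Fin n) ℝ)
    (hC : C = Matrix.diagonal abar * (Matrix.diagonal bbar)⁻¹)
    (ζ : Fin n → ℝ) (hζ : ∀ i, ζ i = abar i * bbar i) :
    C⁻¹ * (Matrix.diagonal β - (2 / ∑ j, α j) • Matrix.vecMulVec α β) * C
        = Matrix.diagonal β - (2 : ℝ) • Matrix.vecMulVec ζ ζ ∧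
    C⁻¹ * (Matrix.diagonal β - (∑ j, α j)⁻¹ • Matrix.vecMulVec α β) * C
        = Matrix.diagonal β - Matrix.vecMulVec ζ ζ ∧
    (Matrix.diagonal β - (2 : ℝ) • Matrix.vecMulVec ζ ζ).IsSymm ∧
    (Matrix.diagonal β - Matrix.vecMulVec ζ ζ).IsSymm := by
  set S := ∑ j, α j
  have hS : 0 < S := Finset.sum_pos (fun i _ => hα i) ⟨⟨0, hn⟩, Finset.mem_univ _⟩
  have habar_pos i : 0 < abar i := habar i ▸ Real.sqrt_pos.2 (div_pos (hα i) hS)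
  have hbbar_pos i : 0 < bbar i := hbbar i ▸ Real.sqrt_pos.2 (hβ i).1
  have hα_eq i : α i = S * abar i ^ 2 := by
    rw [habar, Real.sq_sqrt (div_pos (hα i) hS).le]; field_simp
  have hβ_eq i : β i = bbar i ^ 2 := by rw [hbbar, Real.sq_sqrt (hβ i).1.le]
  set c := abar / bbar
  have hc i : c i ≠ 0 := (div_pos (habar_pos i) (hbbar_pos i)).ne'
  have hC_diag : C = diagonal c := by
    rw [hC, inv_diagonal_of_ne_zero fun i => (hbbar_pos i).ne', diagonal_mul_diagonal]; rfl
  have hleft : c⁻¹ * α = S • ζ := funext fun i => by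
    simp only [c, Pi.mul_apply, Pi.inv_apply, Pi.div_apply, Pi.smul_apply, smul_eq_mul, hα_eq, hζ]
    field_simp [(habar_pos i).ne']
  have hright : β * c = ζ := funext fun i => by
    simp only [c, Pi.mul_apply, Pi.div_apply, hβ_eq, hζ]
    field_simp [(hbbar_pos i).ne']
  have hconj (s : ℝ) : C⁻¹ * (diagonal β - s • vecMulVec α β) * C
      = diagonal β - (s * S) • vecMulVec ζ ζ := by
    rw [hC_diag, inv_diagonal_mul_diagonal_sub_smul_vecMulVec_mul_diagonal hc, hleft, hright,
      smul_vecMulVec, smul_smul]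
  refine ⟨?_, ?_, isSymm_diagonal_sub_smul_vecMulVec_self β ζ 2, ?_⟩
  · rw [hconj, div_mul_cancel₀ _ hS.ne']
  · rw [hconj, inv_mul_cancel₀ hS.ne', one_smul]
  · simpa using isSymm_diagonal_sub_smul_vecMulVec_self β ζ 1
end

section
/- Let n ≥ 1, λ > 0, α ∈ ℝⁿ with αᵢ > 0, β ∈ ℝⁿ with 0 < βᵢ < 1, and define A₁ = diag(β) - 2αβᵀ/∑ⱼαⱼ, B₁ = 2λα/∑ⱼαⱼ. Then u_con ∈ ℝⁿ defined by (u_con)ᵢ = αᵢ T* /(1-βᵢ) with T* = 2λ / ∑ⱼ ((1+βⱼ)/(1-βⱼ)) αⱼ is the unique fixed point of the affine map u ↦ A₁ u + B₁. -/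
/-!
Write `A₁ u = β ⊙ u - (2/S) (β ⬝ u) α` with `S = ∑ αⱼ`. The fixed-point equation then reads
`(1 - βᵢ) uᵢ = αᵢ t` with the single scalar `t = (2/S) (λ - β ⬝ u)`, so every fixed point is
`t • d` with `dᵢ = αᵢ / (1 - βᵢ)`. Substituting back, `t • d` is a fixed point exactly when
`t (S + 2 β ⬝ d) = 2λ`, and `S + 2 β ⬝ d = ∑ⱼ (1 + βⱼ)/(1 - βⱼ) αⱼ > 0`, so `t = T*`.
-/

open Matrix

namespace DiagonalRankOne

variable {ι K : Type*} [Fintype ι] [Field K]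

def dir (α β : ι → K) : ι → K := fun i => α i / (1 - β i)

theorem sum_one_add_div_one_sub_mul {β : ι → K} (hβ : ∀ i, β i ≠ 1) (α : ι → K) :
    ∑ j, (1 + β j) / (1 - β j) * α j = ∑ j, α j + 2 * (β ⬝ᵥ dir α β) := by
  simp only [dotProduct, dir, Finset.mul_sum, ← Finset.sum_add_distrib]
  refine Finset.sum_congr rfl fun j _ => ?_
  field_simp [sub_ne_zero.2 (hβ j).symm]
  ring

variable [DecidableEq ι]

theorem diagonal_sub_smul_vecMulVec_mulVec (α β v : ι → K) (c : K) :
    (diagonal β - c • vecMulVec α β) *ᵥ v = β * v - (c * (β ⬝ᵥ v)) • α := by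
  ext i
  simp only [sub_mulVec, smul_mulVec, vecMulVec_mulVec, mulVec_diagonal, Pi.sub_apply,
    Pi.smul_apply, Pi.mul_apply, MulOpposite.smul_eq_mul_unop, MulOpposite.unop_op, smul_eq_mul]
  ring

theorem eq_mulVec_add_iff_exists_smul_dir {α β : ι → K} (hβ : ∀ i, β i ≠ 1) (c lam : K)
    (v : ι → K) :
    v = (diagonal β - c • vecMulVec α β) *ᵥ v + (c * lam) • α ↔
      ∃ t, t * (1 + c * (β ⬝ᵥ dir α β)) = c * lam ∧ v = t • dir α β := by
  have hβ' : ∀ i, 1 - β i ≠ 0 := fun i => sub_ne_zero.2 (hβ i).symm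
  rw [diagonal_sub_smul_vecMulVec_mulVec]
  constructor
  · intro hv
    set t := c * (lam - β ⬝ᵥ v)
    have hvt : v = t • dir α β := by
      ext i
      have hi := congrFun hv i
      simp only [Pi.add_apply, Pi.sub_apply, Pi.mul_apply, Pi.smul_apply, smul_eq_mul] at hi
      simp only [Pi.smul_apply, smul_eq_mul, dir, t]
      field_simp [hβ' i]
      linear_combination hi
    refine ⟨t, ?_, hvt⟩
    have hβv : β ⬝ᵥ v = t * (β ⬝ᵥ dir α β) := by rw [hvt, dotProduct_smul, smul_eq_mul]
    linear_combination (-c) * hβv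
  · rintro ⟨t, ht, rfl⟩
    ext i
    simp only [Pi.add_apply, Pi.sub_apply, Pi.mul_apply, Pi.smul_apply, smul_eq_mul,
      dotProduct_smul, dir]
    field_simp [hβ' i]
    linear_combination ((1 - β i) * α i) * ht

end DiagonalRankOne

open DiagonalRankOne in
theorem stmt4_general (n : ℕ) (hn : 0 < n) (lam : ℝ)
    (α β : Fin n → ℝ) (hα : ∀ i, 0 < α i) (hβ : ∀ i, 0 < β i ∧ β i < 1)
    (A₁ : Matrix (Fin n) (Fin n) ℝ)
    (hA₁ : A₁ = Matrix.diagonal β - (2 / ∑ j, α j) • Matrix.vecMulVec α β)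
    (B₁ : Fin n → ℝ) (hB₁ : ∀ i, B₁ i = 2 * lam * α i / ∑ j, α j)
    (Tstar : ℝ) (hT : Tstar = 2 * lam / ∑ j, ((1 + β j) / (1 - β j)) * α j)
    (ucon : Fin n → ℝ) (hu : ∀ i, ucon i = α i * Tstar / (1 - β i)) :
    ucon = A₁.mulVec ucon + B₁ ∧ ∀ v : Fin n → ℝ, v = A₁.mulVec v + B₁ → v = ucon := by
  have : Nonempty (Fin n) := ⟨⟨0, hn⟩⟩
  have hβ1 : ∀ i, β i ≠ 1 := fun i => (hβ i).2.ne
  set S := ∑ j, α j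
  have hS : 0 < S := Finset.sum_pos (fun i _ => hα i) Finset.univ_nonempty
  have hD : 0 < ∑ j, (1 + β j) / (1 - β j) * α j := Finset.sum_pos (fun i _ =>
    mul_pos (div_pos (by linarith [(hβ i).1]) (by linarith [(hβ i).2])) (hα i))
    Finset.univ_nonempty
  have hB : B₁ = (2 / S * lam) • α := by
    ext i; rw [hB₁]; simp only [Pi.smul_apply, smul_eq_mul]; ring
  have hucon : ucon = Tstar • dir α β := by
    ext i; rw [hu]; simp only [Pi.smul_apply, smul_eq_mul, dir]; ring
  have hscalar : ∀ t : ℝ, t * (1 + 2 / S * (β ⬝ᵥ dir α β)) = 2 / S * lam ↔ t = Tstar := by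
    intro t
    rw [hT, eq_div_iff hD.ne', sum_one_add_div_one_sub_mul hβ1]
    field_simp
    constructor <;> intro h <;> linarith
  subst hA₁ hB
  refine ⟨(eq_mulVec_add_iff_exists_smul_dir hβ1 _ _ _).2 ⟨Tstar, (hscalar Tstar).2 rfl, hucon⟩,
    fun v hv => ?_⟩
  obtain ⟨t, ht, rfl⟩ := (eq_mulVec_add_iff_exists_smul_dir hβ1 _ _ _).1 hv
  rw [hucon, (hscalar t).1 ht]

theorem stmt4 (n : ℕ) (hn : 0 < n) (lam : ℝ) (hlam : 0 < lam)
    (α β : Fin n → ℝ) (hα : ∀ i, 0 < α i) (hβ : ∀ i, 0 < β i ∧ β i < 1)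
    (A₁ : Matrix (Fin n) (Fin n) ℝ)
    (hA₁ : A₁ = Matrix.diagonal β - (2 / ∑ j, α j) • Matrix.vecMulVec α β)
    (B₁ : Fin n → ℝ) (hB₁ : ∀ i, B₁ i = 2 * lam * α i / ∑ j, α j)
    (Tstar : ℝ) (hT : Tstar = 2 * lam / ∑ j, ((1 + β j) / (1 - β j)) * α j)
    (ucon : Fin n → ℝ) (hu : ∀ i, ucon i = α i * Tstar / (1 - β i)) :
    ucon = A₁.mulVec ucon + B₁ ∧ ∀ v : Fin n → ℝ, v = A₁.mulVec v + B₁ → v = ucon :=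
  stmt4_general n hn lam α β hα hβ A₁ hA₁ B₁ hB₁ Tstar hT ucon hu
end

section
/- Let n ≥ 1, λ > 0, φ > 1, α ∈ ℝⁿ with αᵢ > 0, β ∈ ℝⁿ with 0 < βᵢ < 1, and define A₂ = diag(β) - αβᵀ/∑ⱼαⱼ, B₂ = φλα/∑ⱼαⱼ. Then the vector ũ with ũᵢ = αᵢ T₂* /(1-βᵢ), where T₂* = φλ / (∑ⱼαⱼ + ∑ⱼ (βⱼ/(1-βⱼ))αⱼ), satisfies ũ = A₂ ũ + B₂. -/
open Matrix

/-!
Writing `S = ∑ⱼ αⱼ`, the map `u ↦ A₂ u + B₂` is `uᵢ ↦ βᵢ uᵢ + αᵢ (φλ - β ⬝ᵥ u) / S`. The ansatz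
`ũᵢ = αᵢ T / (1 - βᵢ)` satisfies `ũᵢ - βᵢ ũᵢ = αᵢ T`, so it is a fixed point exactly when
`T S = φλ - β ⬝ᵥ ũ = φλ - T ∑ⱼ βⱼ αⱼ / (1 - βⱼ)`, which is the defining equation of `T₂*`.
-/

section FixedPoint

variable {ι : Type*} [Fintype ι]

lemma dotProduct_div_one_sub (α β : ι → ℝ) (T : ℝ) (hβ : ∀ i, β i ≠ 1) :
    β ⬝ᵥ (fun i ↦ α i * T / (1 - β i)) = T * ∑ j, β j / (1 - β j) * α j := by
  rw [dotProduct, Finset.mul_sum]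
  refine Finset.sum_congr rfl fun j _ ↦ ?_
  have : 1 - β j ≠ 0 := sub_ne_zero.mpr (hβ j).symm
  field_simp

variable [DecidableEq ι]

lemma diagonal_sub_smul_vecMulVec_mulVec (α β u : ι → ℝ) (c : ℝ) :
    (diagonal β - c • vecMulVec α β) *ᵥ u = β * u - (c * (β ⬝ᵥ u)) • α := by
  ext i
  simp only [sub_mulVec, smul_mulVec, mulVec_diagonal, vecMulVec_mulVec, Pi.sub_apply,
    Pi.smul_apply, Pi.mul_apply, MulOpposite.smul_eq_mul_unop, MulOpposite.unop_op, smul_eq_mul]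
  ring

theorem eq_diagonal_sub_smul_vecMulVec_mulVec_add (α β : ι → ℝ) (c T : ℝ)
    (hβ : ∀ i, β i ≠ 1) (hS : ∑ j, α j ≠ 0)
    (hT : T * ((∑ j, α j) + ∑ j, β j / (1 - β j) * α j) = c) :
    (fun i ↦ α i * T / (1 - β i)) =
      (diagonal β - (∑ j, α j)⁻¹ • vecMulVec α β) *ᵥ (fun i ↦ α i * T / (1 - β i)) +
        fun i ↦ c * α i / ∑ j, α j := by
  rw [diagonal_sub_smul_vecMulVec_mulVec, dotProduct_div_one_sub α β T hβ, ← hT]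
  ext i
  have : 1 - β i ≠ 0 := sub_ne_zero.mpr (hβ i).symm
  simp only [Pi.add_apply, Pi.sub_apply, Pi.mul_apply, Pi.smul_apply, smul_eq_mul]
  field_simp
  ring

end FixedPoint

theorem stmt5_general (n : ℕ) (hn : 0 < n) (lam φ : ℝ)
    (α β : Fin n → ℝ) (hα : ∀ i, 0 < α i) (hβ : ∀ i, 0 < β i ∧ β i < 1)
    (A₂ : Matrix (Fin n) (Fin n) ℝ)
    (hA₂ : A₂ = Matrix.diagonal β - (∑ j, α j)⁻¹ • Matrix.vecMulVec α β)
    (B₂ : Fin n → ℝ) (hB₂ : ∀ i, B₂ i = φ * lam * α i / ∑ j, α j)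
    (T₂ : ℝ) (hT₂ : T₂ = φ * lam / ((∑ j, α j) + ∑ j, (β j / (1 - β j)) * α j))
    (utld : Fin n → ℝ) (hu : ∀ i, utld i = α i * T₂ / (1 - β i)) :
    utld = A₂.mulVec utld + B₂ := by
  have : Nonempty (Fin n) := Fin.pos_iff_nonempty.mp hn
  have hS : 0 < ∑ j, α j := Finset.sum_pos (fun i _ ↦ hα i) Finset.univ_nonempty
  have hE : 0 ≤ ∑ j, β j / (1 - β j) * α j := Finset.sum_nonneg fun j _ ↦
    (mul_pos (div_pos (hβ j).1 (sub_pos.mpr (hβ j).2)) (hα j)).le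
  have hT : T₂ * ((∑ j, α j) + ∑ j, β j / (1 - β j) * α j) = φ * lam := by
    rw [hT₂]
    exact div_mul_cancel₀ _ (by positivity)
  rw [funext hu, funext hB₂, hA₂]
  exact eq_diagonal_sub_smul_vecMulVec_mulVec_add α β _ T₂ (fun i ↦ (hβ i).2.ne) hS.ne' hT

theorem stmt5 (n : ℕ) (hn : 0 < n) (lam φ : ℝ) (hlam : 0 < lam) (hφ : 1 < φ)
    (α β : Fin n → ℝ) (hα : ∀ i, 0 < α i) (hβ : ∀ i, 0 < β i ∧ β i < 1)
    (A₂ : Matrix (Fin n) (Fin n) ℝ)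
    (hA₂ : A₂ = Matrix.diagonal β - (∑ j, α j)⁻¹ • Matrix.vecMulVec α β)
    (B₂ : Fin n → ℝ) (hB₂ : ∀ i, B₂ i = φ * lam * α i / ∑ j, α j)
    (T₂ : ℝ) (hT₂ : T₂ = φ * lam / ((∑ j, α j) + ∑ j, (β j / (1 - β j)) * α j))
    (utld : Fin n → ℝ) (hu : ∀ i, utld i = α i * T₂ / (1 - β i)) :
    utld = A₂.mulVec utld + B₂ :=
  stmt5_general n hn lam φ α β hα hβ A₂ hA₂ B₂ hB₂ T₂ hT₂ utld hu
end

section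
/- Let n ≥ 1 and consider the switched system e(k+1) = A₁ e(k) if βᵀe(k) ≥ 0 and e(k+1) = A₂ e(k) if βᵀe(k) < 0, where A₁ = diag(β) - 2αβᵀ/∑ⱼαⱼ and A₂ = diag(β) - αβᵀ/∑ⱼαⱼ, with αᵢ > 0 and 0 < βᵢ < 1. Then for every initial condition e(0) ∈ ℝⁿ, e(k) → 0 as k → ∞; moreover there exists L ≥ 1 such that ‖e(k)‖ ≤ L (max_i βᵢ)^k ‖e(0)‖ for all k. -/
/-!
With `D = diag √(β / α)` and `v = √(α β)`, every matrix `A_c = diag β - c α βᵀ` satisfies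
`D A_c = (diag β - c v vᵀ) D`, and the right-hand matrix is symmetric. Its quadratic form
`∑ βᵢ yᵢ² - c (v ⬝ y)²` lies between `-∑ βᵢ yᵢ²` and `∑ βᵢ yᵢ²` as soon as `0 ≤ c ∑ α ≤ 2`, because
`(v ⬝ y)² ≤ (∑ α) ∑ βᵢ yᵢ²` by Cauchy–Schwarz; so its operator norm is at most `max β`.
Both modes of the switched system (`c = 2 / ∑ α` and `c = 1 / ∑ α`) thus contract `‖D e(k)‖₂` by
`max β` at every step, whichever is active, and equivalence of norms transfers this to `e(k)`.
-/

open Matrix Filter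
open scoped RealInnerProductSpace

section InnerProductSpace
variable {E : Type*} [NormedAddCommGroup E] [InnerProductSpace ℝ E] [FiniteDimensional ℝ E]

theorem LinearMap.IsSymmetric.norm_apply_le_of_abs_inner_le {T : E →ₗ[ℝ] E} (hT : T.IsSymmetric)
    {b : ℝ} (hb : 0 ≤ b) (h : ∀ x, |⟪T x, x⟫| ≤ b * ‖x‖ ^ 2) (x : E) : ‖T x‖ ≤ b * ‖x‖ := by
  let T' := LinearMap.toContinuousLinearMap T
  have hT' : ‖T'‖ ≤ b := by
    rw [T'.norm_eq_iSup_rayleighQuotient hT]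
    refine ciSup_le fun x => ?_
    rw [ContinuousLinearMap.rayleighQuotient, ContinuousLinearMap.reApplyInnerSelf_apply,
      RCLike.re_to_real, abs_div, abs_sq]
    exact div_le_of_le_mul₀ (sq_nonneg _) hb (h x)
  exact (T'.le_opNorm x).trans (by gcongr)

end InnerProductSpace

section NormedSpace
variable {E F : Type*} [NormedAddCommGroup E] [NormedSpace ℝ E] [FiniteDimensional ℝ E]
  [NormedAddCommGroup F] [NormedSpace ℝ F]

theorem exists_norm_le_mul_pow_of_norm_map_succ_le (T : E →ₗ[ℝ] F) (hT : Function.Injective T)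
    {b : ℝ} (hb : 0 ≤ b) {e : ℕ → E} (he : ∀ k, ‖T (e (k + 1))‖ ≤ b * ‖T (e k)‖) :
    ∃ L : ℝ, 1 ≤ L ∧ ∀ k, ‖e k‖ ≤ L * b ^ k * ‖e 0‖ := by
  obtain ⟨K, -, hK⟩ := T.exists_antilipschitzWith (LinearMap.ker_eq_bot.mpr hT)
  set C := ‖LinearMap.toContinuousLinearMap T‖
  have hTk : ∀ k, ‖T (e k)‖ ≤ b ^ k * ‖T (e 0)‖ := by
    intro k
    induction k with
    | zero => simp
    | succ k ih => calc
        ‖T (e (k + 1))‖ ≤ b * ‖T (e k)‖ := he k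
        _ ≤ b * (b ^ k * ‖T (e 0)‖) := by gcongr
        _ = b ^ (k + 1) * ‖T (e 0)‖ := by ring
  refine ⟨max 1 (K * C), le_max_left _ _, fun k => ?_⟩
  calc ‖e k‖ ≤ K * ‖T (e k)‖ := hK.le_mul_norm (map_zero T) (e k)
    _ ≤ K * (b ^ k * (C * ‖e 0‖)) := by
        gcongr
        exact (hTk k).trans (by gcongr; exact (LinearMap.toContinuousLinearMap T).le_opNorm (e 0))
    _ = K * C * b ^ k * ‖e 0‖ := by ring
    _ ≤ max 1 (K * C) * b ^ k * ‖e 0‖ := by gcongr; exact le_max_right _ _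

end NormedSpace

section DiagonalSubRankOne
variable {ι : Type*} [Fintype ι] [DecidableEq ι]

omit [Fintype ι] in
theorem isHermitian_diagonal_sub_smul_vecMulVec_self (β v : ι → ℝ) (c : ℝ) :
    (diagonal β - c • vecMulVec v v).IsHermitian :=
  (isHermitian_diagonal β).sub <|
    IsHermitian.smul (by simp [IsHermitian]) (IsSelfAdjoint.all c)

theorem inner_toEuclideanLin_diagonal_sub_smul_vecMulVec_self (β v : ι → ℝ) (c : ℝ)
    (y : EuclideanSpace ℝ ι) :
    ⟪toEuclideanLin (diagonal β - c • vecMulVec v v) y, y⟫ =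
      ∑ i, β i * y i ^ 2 - c * (∑ i, v i * y i) ^ 2 := by
  simp only [PiLp.inner_apply, toLpLin_apply, sub_mulVec, mulVec_diagonal, smul_mulVec,
    vecMulVec_mulVec, Pi.sub_apply, Pi.smul_apply, smul_eq_mul, RCLike.inner_apply, conj_trivial,
    mul_sub, Finset.sum_sub_distrib]
  congr 1
  · exact Finset.sum_congr rfl fun i _ => by ring
  · rw [sq, Finset.mul_sum, Finset.mul_sum]
    refine Finset.sum_congr rfl fun i _ => ?_
    simp only [op_smul_eq_mul, dotProduct]
    ring

omit [DecidableEq ι] in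
theorem sq_sum_sqrt_mul_mul_le {α β : ι → ℝ} (hα : ∀ i, 0 ≤ α i) (hβ : ∀ i, 0 ≤ β i)
    (y : ι → ℝ) : (∑ i, √(α i * β i) * y i) ^ 2 ≤ (∑ i, α i) * ∑ i, β i * y i ^ 2 :=
  Finset.sum_sq_le_sum_mul_sum_of_sq_le_mul _ (fun i _ => hα i)
    (fun i _ => mul_nonneg (hβ i) (sq_nonneg _)) fun i _ => by
      rw [mul_pow, Real.sq_sqrt (mul_nonneg (hα i) (hβ i)), mul_assoc]

theorem diagonal_sqrt_div_mul_eq {α β : ι → ℝ} (hα : ∀ i, 0 < α i) (hβ : ∀ i, 0 ≤ β i) (c : ℝ) :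
    diagonal (fun i => √(β i / α i)) * (diagonal β - c • vecMulVec α β) =
      (diagonal β - c • vecMulVec (fun i => √(α i * β i)) (fun i => √(α i * β i))) *
        diagonal (fun i => √(β i / α i)) := by
  have h₁ : ∀ i, √(β i / α i) * α i = √(α i * β i) := fun i => by
    have := (hα i).ne'
    calc √(β i / α i) * α i = √(β i / α i * α i ^ 2) := by
          rw [Real.sqrt_mul' _ (sq_nonneg _), Real.sqrt_sq (hα i).le]
      _ = √(α i * β i) := by congr 1; field_simp
  have h₂ : ∀ i, √(α i * β i) * √(β i / α i) = β i := fun i => by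
    have := (hα i).ne'
    rw [← Real.sqrt_mul (mul_nonneg (hα i).le (hβ i)),
      show α i * β i * (β i / α i) = β i ^ 2 by field_simp, Real.sqrt_sq (hβ i)]
  ext i j
  have key : √(α i * β i) * √(α j * β j) * √(β j / α j) = √(β i / α i) * (α i * β j) := by
    rw [mul_assoc, h₂, ← h₁]; ring
  simp only [diagonal_mul, mul_diagonal, vecMulVec_apply, Matrix.sub_apply, diagonal_apply,
    Matrix.smul_apply, smul_eq_mul]
  split_ifs with hij
  · subst hij; linear_combination c * key
  · linear_combination c * key

theorem norm_toEuclideanLin_diagonal_sub_smul_vecMulVec_le {α β : ι → ℝ} (hα : ∀ i, 0 ≤ α i)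
    (hβ : ∀ i, 0 ≤ β i) {b c : ℝ} (hb : 0 ≤ b) (hβb : ∀ i, β i ≤ b) (hc : 0 ≤ c)
    (hcα : c * ∑ i, α i ≤ 2) (y : EuclideanSpace ℝ ι) :
    ‖toEuclideanLin (diagonal β - c • vecMulVec (fun i => √(α i * β i)) fun i => √(α i * β i)) y‖
      ≤ b * ‖y‖ := by
  refine (isSymmetric_toEuclideanLin_iff.mpr
    (isHermitian_diagonal_sub_smul_vecMulVec_self _ _ _)).norm_apply_le_of_abs_inner_le hb
    (fun y => ?_) y
  rw [inner_toEuclideanLin_diagonal_sub_smul_vecMulVec_self, EuclideanSpace.real_norm_sq_eq]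
  have hdiag_nonneg : 0 ≤ ∑ i, β i * y i ^ 2 :=
    Finset.sum_nonneg fun i _ => mul_nonneg (hβ i) (sq_nonneg _)
  have hdiag_le : ∑ i, β i * y i ^ 2 ≤ b * ∑ i, y i ^ 2 := by
    rw [Finset.mul_sum]; gcongr with i; exact hβb i
  have hrank_le : c * (∑ i, √(α i * β i) * y i) ^ 2 ≤ 2 * ∑ i, β i * y i ^ 2 := calc
    c * (∑ i, √(α i * β i) * y i) ^ 2 ≤ c * ((∑ i, α i) * ∑ i, β i * y i ^ 2) := by
      gcongr; exact sq_sum_sqrt_mul_mul_le hα hβ y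
    _ ≤ 2 * ∑ i, β i * y i ^ 2 := by rw [← mul_assoc]; gcongr
  have hrank_nonneg : 0 ≤ c * (∑ i, √(α i * β i) * y i) ^ 2 := by positivity
  rw [abs_le]
  constructor <;> linarith

noncomputable def symmetrizingScaling (α β : ι → ℝ) : (ι → ℝ) →ₗ[ℝ] EuclideanSpace ℝ ι :=
  (WithLp.linearEquiv 2 ℝ (ι → ℝ)).symm.toLinearMap ∘ₗ toLin' (diagonal fun i => √(β i / α i))

theorem symmetrizingScaling_apply (α β x : ι → ℝ) :
    symmetrizingScaling α β x = WithLp.toLp 2 (diagonal (fun i => √(β i / α i)) *ᵥ x) :=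
  rfl

theorem symmetrizingScaling_injective {α β : ι → ℝ} (hα : ∀ i, 0 < α i) (hβ : ∀ i, 0 < β i) :
    Function.Injective (symmetrizingScaling α β) := by
  intro x y hxy
  ext i
  have := congrArg (fun z : EuclideanSpace ℝ ι => z i) hxy
  simp only [symmetrizingScaling_apply, PiLp.toLp_apply, mulVec_diagonal] at this
  exact mul_left_cancel₀ (Real.sqrt_pos.mpr (div_pos (hβ i) (hα i))).ne' this

theorem symmetrizingScaling_mulVec {α β : ι → ℝ} (hα : ∀ i, 0 < α i) (hβ : ∀ i, 0 ≤ β i)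
    (c : ℝ) (x : ι → ℝ) :
    symmetrizingScaling α β ((diagonal β - c • vecMulVec α β) *ᵥ x) =
      toEuclideanLin (diagonal β - c • vecMulVec (fun i => √(α i * β i)) fun i => √(α i * β i))
        (symmetrizingScaling α β x) := by
  simp only [symmetrizingScaling_apply, toLpLin_toLp, toLin'_apply, mulVec_mulVec,
    diagonal_sqrt_div_mul_eq hα hβ]

theorem norm_symmetrizingScaling_mulVec_le {α β : ι → ℝ} (hα : ∀ i, 0 < α i)
    (hβ : ∀ i, 0 ≤ β i) {b c : ℝ} (hb : 0 ≤ b) (hβb : ∀ i, β i ≤ b) (hc : 0 ≤ c)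
    (hcα : c * ∑ i, α i ≤ 2) (x : ι → ℝ) :
    ‖symmetrizingScaling α β ((diagonal β - c • vecMulVec α β) *ᵥ x)‖ ≤
      b * ‖symmetrizingScaling α β x‖ := by
  rw [symmetrizingScaling_mulVec hα hβ]
  exact norm_toEuclideanLin_diagonal_sub_smul_vecMulVec_le (fun i => (hα i).le) hβ hb hβb hc hcα _

end DiagonalSubRankOne

theorem stmt8 (n : ℕ) (hn : 0 < n) (α β : Fin n → ℝ)
    (hα : ∀ i, 0 < α i) (hβ : ∀ i, 0 < β i ∧ β i < 1)
    (A₁ A₂ : Matrix (Fin n) (Fin n) ℝ)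
    (hA₁ : A₁ = Matrix.diagonal β - (2 / ∑ j, α j) • Matrix.vecMulVec α β)
    (hA₂ : A₂ = Matrix.diagonal β - (∑ j, α j)⁻¹ • Matrix.vecMulVec α β)
    (e : ℕ → Fin n → ℝ)
    (he : ∀ k, e (k + 1) =
      if 0 ≤ ∑ i, β i * e k i then A₁.mulVec (e k) else A₂.mulVec (e k)) :
    Tendsto e atTop (nhds 0) ∧
    ∃ L : ℝ, 1 ≤ L ∧ ∀ k : ℕ,
      ‖e k‖ ≤ L * (Finset.univ.sup' (Finset.univ_nonempty_iff.mpr ⟨⟨0, hn⟩⟩) β) ^ k * ‖e 0‖ := by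
  set b := Finset.univ.sup' (Finset.univ_nonempty_iff.mpr ⟨⟨0, hn⟩⟩) β
  have hβb : ∀ i, β i ≤ b := fun i => Finset.le_sup' β (Finset.mem_univ i)
  have hb : 0 ≤ b := (hβ ⟨0, hn⟩).1.le.trans (hβb _)
  have hb_lt : b < 1 := (Finset.sup'_lt_iff _).mpr fun i _ => (hβ i).2
  have hαsum : 0 < ∑ j, α j := Finset.sum_pos (fun i _ => hα i) ⟨⟨0, hn⟩, Finset.mem_univ _⟩
  have hβ₀ : ∀ i, 0 ≤ β i := fun i => (hβ i).1.le
  have hstep : ∀ k,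
      ‖symmetrizingScaling α β (e (k + 1))‖ ≤ b * ‖symmetrizingScaling α β (e k)‖ := by
    intro k
    rw [he k]
    split_ifs
    · rw [hA₁]
      exact norm_symmetrizingScaling_mulVec_le hα hβ₀ hb hβb (by positivity)
        (div_mul_cancel₀ _ hαsum.ne').le _
    · rw [hA₂]
      exact norm_symmetrizingScaling_mulVec_le hα hβ₀ hb hβb (by positivity)
        (by rw [inv_mul_cancel₀ hαsum.ne']; norm_num) _
  obtain ⟨L, hL, hbound⟩ := exists_norm_le_mul_pow_of_norm_map_succ_le _
    (symmetrizingScaling_injective hα fun i => (hβ i).1) hb hstep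
  refine ⟨squeeze_zero_norm hbound ?_, L, hL, hbound⟩
  simpa using ((tendsto_pow_atTop_nhds_zero_of_lt_one hb hb_lt).const_mul L).mul_const ‖e 0‖
end

section
/- Let n ≥ 1, λ > 0, α ∈ ℝⁿ with αᵢ > 0, β ∈ ℝⁿ with 0 < βᵢ < 1 satisfying 1 + (∑ᵢαᵢ)/(∑ᵢ((1+βᵢ)/(1-βᵢ))αᵢ) = φ, and let u_con be given by (u_con)ᵢ = αᵢT*/(1-βᵢ) with T* = 2λ/∑ⱼ((1+βⱼ)/(1-βⱼ))αⱼ. Then βᵀu_con = (2-φ)λ and ∑ᵢ(u_con)ᵢ = φλ. -/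
/-!
Put `x i = α i / (1 - β i)`, so that `u_con = T* x`, and write `C = ∑ x i`, `B = ∑ β i x i`.
Then `∑ α i = C - B` and `∑ (1 + β i)/(1 - β i) α i = C + B`, hence `φ = 2C/(C + B)` and
`T* = 2λ/(C + B)`; both identities are now `T* B = (2 - φ)λ` and `T* C = φλ`.
-/

open Finset

section
variable {ι : Type*} [Fintype ι] (β x : ι → ℝ)

lemma sum_one_add_mul_eq : ∑ i, (1 + β i) * x i = ∑ i, x i + ∑ i, β i * x i := by
  simp only [add_mul, one_mul, sum_add_distrib]

lemma sum_one_sub_mul_eq : ∑ i, (1 - β i) * x i = ∑ i, x i - ∑ i, β i * x i := by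
  simp only [sub_mul, one_mul, sum_sub_distrib]

end

lemma two_mul_div_add_mul_eq {B C lam : ℝ} (h : C + B ≠ 0) :
    2 * lam / (C + B) * B = (2 - (1 + (C - B) / (C + B))) * lam ∧
      2 * lam / (C + B) * C = (1 + (C - B) / (C + B)) * lam := by
  constructor <;> field_simp <;> ring

theorem stmt16_general (n : ℕ) (hn : 0 < n) (lam φ : ℝ)
    (α β : Fin n → ℝ) (hα : ∀ i, 0 < α i) (hβ : ∀ i, 0 < β i ∧ β i < 1)
    (hφ : 1 + (∑ i, α i) / (∑ i, ((1 + β i) / (1 - β i)) * α i) = φ)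
    (Tstar : ℝ) (hT : Tstar = 2 * lam / ∑ j, ((1 + β j) / (1 - β j)) * α j)
    (ucon : Fin n → ℝ) (hu : ∀ i, ucon i = α i * Tstar / (1 - β i)) :
    (∑ i, β i * ucon i) = (2 - φ) * lam ∧ (∑ i, ucon i) = φ * lam := by
  have hβ' : ∀ i, 1 - β i ≠ 0 := fun i => sub_ne_zero.2 (hβ i).2.ne'
  set x : Fin n → ℝ := fun i => α i / (1 - β i)
  have hA : ∑ i, α i = ∑ i, x i - ∑ i, β i * x i := by
    rw [← sum_one_sub_mul_eq]
    exact sum_congr rfl fun i _ => by simp only [x]; field_simp [hβ' i]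
  have hS : ∑ i, (1 + β i) / (1 - β i) * α i = ∑ i, x i + ∑ i, β i * x i := by
    rw [← sum_one_add_mul_eq]
    exact sum_congr rfl fun i _ => by simp only [x]; ring
  have hS_pos : 0 < ∑ i, (1 + β i) / (1 - β i) * α i := by
    have : Nonempty (Fin n) := ⟨⟨0, hn⟩⟩
    refine sum_pos (fun i _ => ?_) univ_nonempty
    have := hα i
    have := (hβ i).1
    have : 0 < 1 - β i := sub_pos.2 (hβ i).2
    positivity
  have hBu : ∑ i, β i * ucon i = Tstar * ∑ i, β i * x i := by
    rw [mul_sum]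
    exact sum_congr rfl fun i _ => by rw [hu]; simp only [x]; ring
  have hCu : ∑ i, ucon i = Tstar * ∑ i, x i := by
    rw [mul_sum]
    exact sum_congr rfl fun i _ => by rw [hu]; simp only [x]; ring
  rw [hS] at hT hS_pos
  rw [hA, hS] at hφ
  subst hφ hT
  rw [hBu, hCu]
  exact two_mul_div_add_mul_eq hS_pos.ne'

theorem stmt16 (n : ℕ) (hn : 0 < n) (lam φ : ℝ) (hlam : 0 < lam)
    (α β : Fin n → ℝ) (hα : ∀ i, 0 < α i) (hβ : ∀ i, 0 < β i ∧ β i < 1)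
    (hφ : 1 + (∑ i, α i) / (∑ i, ((1 + β i) / (1 - β i)) * α i) = φ)
    (Tstar : ℝ) (hT : Tstar = 2 * lam / ∑ j, ((1 + β j) / (1 - β j)) * α j)
    (ucon : Fin n → ℝ) (hu : ∀ i, ucon i = α i * Tstar / (1 - β i)) :
    (∑ i, β i * ucon i) = (2 - φ) * lam ∧ (∑ i, ucon i) = φ * lam :=
  stmt16_general n hn lam φ α β hα hβ hφ Tstar hT ucon hu
end

section
/- Let n ≥ 1, α ∈ ℝⁿ with αᵢ > 0 and β ∈ ℝⁿ with 0 < β₁ ≤ β₂ ≤ ... ≤ βₙ < 1, and let A₂ = diag(β) - αβᵀ/∑ⱼαⱼ with real eigenvalues ξ₁ ≤ ξ₂ ≤ ... ≤ ξₙ (which exist since A₂ is diagonally similar to a symmetric matrix). Then the eigenvalues interlace with the βᵢ: ξ₁ ≤ β₁ ≤ ξ₂ ≤ β₂ ≤ ... ≤ ξₙ ≤ βₙ, and moreover ξ₁ = 0. -/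
/-!
Multiplying out `det (X - A₂)` by the matrix determinant lemma gives the secular polynomial
`∏ⱼ (X - βⱼ) + ∑ᵢ wᵢ ∏_{j ≠ i} (X - βⱼ)` with weights `wᵢ = αᵢ βᵢ / ∑ⱼ αⱼ > 0`. If the value `b`
occurs `m` times among the `βⱼ`, this polynomial is `(X - b) ^ (m - 1)` times a polynomial whose
value at `b` is a positive multiple of `∏_{βⱼ ≠ b} (b - βⱼ)`. Hence `b` is an eigenvalue of
multiplicity exactly `m - 1`, and the numbers of eigenvalues and of `βⱼ` above `b` have the same
parity. Between two consecutive values of `β` there must therefore be an odd number of eigenvalues,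
and below the smallest one there is the eigenvalue `0` (the all-ones row vector annihilates `A₂`);
counting then leaves room for exactly one eigenvalue in each gap.
-/

open Matrix Polynomial Finset

noncomputable def secularPoly {ι R : Type*} [Fintype ι] [DecidableEq ι] [CommRing R]
    (w d : ι → R) : R[X] :=
  ∏ j, (X - C (d j)) + ∑ i, C (w i) * ∏ j ∈ univ.erase i, (X - C (d j))

namespace Matrix

variable {ι K : Type*} [Fintype ι] [DecidableEq ι] [Field K]

theorem det_diagonal_add_vecMulVec {d : ι → K} (hd : ∀ i, d i ≠ 0) (u v : ι → K) :
    (diagonal d + vecMulVec u v).det = ∏ i, d i + ∑ i, u i * v i * ∏ j ∈ univ.erase i, d j := by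
  have hfactor : diagonal d + vecMulVec u v = diagonal d * (1 + vecMulVec (d⁻¹ * u) v) := by
    rw [Matrix.mul_add, Matrix.mul_one, mul_vecMulVec]
    congr 2
    ext i
    simp [mulVec_diagonal, hd i]
  rw [hfactor, det_mul, det_diagonal, vecMulVec_eq Unit, det_one_add_replicateCol_mul_replicateRow,
    mul_add, mul_one, dotProduct, mul_sum]
  congr 1
  refine sum_congr rfl fun i _ => ?_
  rw [← mul_prod_erase univ d (mem_univ i), Pi.mul_apply, Pi.inv_apply]
  field_simp [hd i]

theorem charpoly_diagonal_sub_vecMulVec (d u v : ι → K) :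
    (diagonal d - vecMulVec u v).charpoly = secularPoly (u * v) d := by
  -- In `RatFunc K` the diagonal entries `X - C (d i)` are invertible.
  let φ := algebraMap K[X] (RatFunc K)
  have hcharmatrix : (charmatrix (diagonal d - vecMulVec u v)).map φ
      = diagonal (fun i => φ (X - C (d i)))
        + vecMulVec (fun i => φ (C (u i))) (fun j => φ (C (v j))) := by
    refine Matrix.ext fun i j => ?_
    by_cases h : i = j
    · subst h; simp [vecMulVec_apply]; ring
    · simp [h, vecMulVec_apply]
  apply RatFunc.algebraMap_injective K
  rw [charpoly, RingHom.map_det, RingHom.mapMatrix_apply, hcharmatrix, det_diagonal_add_vecMulVec]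
  · simp [secularPoly, φ]
  · exact fun i => (map_ne_zero_iff _ (RatFunc.algebraMap_injective K)).mpr (X_sub_C_ne_zero _)

theorem det_diagonal_sub_inv_sum_smul_vecMulVec {α β : ι → K} (hα : ∑ i, α i ≠ 0) :
    (diagonal β - (∑ i, α i)⁻¹ • vecMulVec α β).det = 0 := by
  obtain ⟨i, -, -⟩ := exists_ne_zero_of_sum_ne_zero hα
  refine exists_vecMul_eq_zero_iff.1 ⟨1, Function.ne_iff.2 ⟨i, one_ne_zero⟩, ?_⟩
  rw [← smul_vecMulVec, vecMul_sub, vecMul_vecMulVec]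
  ext j
  simp [vecMul_diagonal, dotProduct, ← mul_sum, hα]

theorem exists_eq_zero_of_charpoly_eq_prod {A : Matrix ι ι K} (hA : A.det = 0) {ξ : ι → K}
    (hspec : A.charpoly = ∏ i, (X - C (ξ i))) : ∃ k, ξ k = 0 := by
  have hroot : A.charpoly.IsRoot 0 := by
    rw [← mem_spectrum_iff_isRoot_charpoly, spectrum.zero_mem_iff, isUnit_iff_isUnit_det, hA]
    exact not_isUnit_zero
  rw [hspec, IsRoot.def, eval_prod, prod_eq_zero_iff] at hroot
  obtain ⟨k, -, hk⟩ := hroot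
  exact ⟨k, by simpa [sub_eq_zero, eq_comm] using hk⟩

end Matrix

namespace Polynomial

variable {ι R : Type*} [CommRing R]

theorem X_sub_C_pow_mul_cancel [IsDomain R] {a : R} {k l : ℕ} {G H : R[X]} (hG : ¬G.IsRoot a)
    (hH : ¬H.IsRoot a) (h : (X - C a) ^ k * G = (X - C a) ^ l * H) : k = l ∧ G = H := by
  have hmult : ∀ {m : ℕ} {P : R[X]}, ¬P.IsRoot a → ((X - C a) ^ m * P).rootMultiplicity a = m :=
    fun {m P} hP => by
      rw [mul_comm, rootMultiplicity_mul_X_sub_C_pow (by rintro rfl; simp at hP),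
        rootMultiplicity_eq_zero hP, zero_add]
  have hkl : k = l := by rw [← hmult (m := k) hG, h, hmult hH]
  exact ⟨hkl, mul_left_cancel₀ (pow_ne_zero _ (X_sub_C_ne_zero a)) (hkl ▸ h)⟩

variable [DecidableEq R]

theorem prod_X_sub_C_eq_X_sub_C_pow_mul (s : Finset ι) (f : ι → R) (b : R) :
    ∏ j ∈ s, (X - C (f j))
      = (X - C b) ^ #{j ∈ s | f j = b} * ∏ j ∈ s with f j ≠ b, (X - C (f j)) := by
  rw [← prod_filter_mul_prod_filter_not s (fun j => f j = b),
    prod_congr rfl fun j hj => by rw [(mem_filter.1 hj).2], prod_const]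

theorem card_eq_and_prod_eq_of_prod_X_sub_C_eq [Fintype ι] [IsDomain R] {x : ι → R} {b : R}
    {k : ℕ} {H : R[X]} (hH : ¬H.IsRoot b) (h : ∏ i, (X - C (x i)) = (X - C b) ^ k * H) :
    #{i | x i = b} = k ∧ ∏ i with x i ≠ b, (b - x i) = H.eval b := by
  rw [prod_X_sub_C_eq_X_sub_C_pow_mul univ x b] at h
  have hG : ¬(∏ i with x i ≠ b, (X - C (x i))).IsRoot b := by
    rw [IsRoot.def, eval_prod]
    exact prod_ne_zero_iff.2 fun i hi => by simpa [sub_eq_zero, eq_comm] using (mem_filter.1 hi).2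
  obtain ⟨hk, hGH⟩ := X_sub_C_pow_mul_cancel hG hH h
  exact ⟨hk, by simp [← hGH, eval_prod]⟩

theorem secularPoly_eq_X_sub_C_pow_mul [Fintype ι] [DecidableEq ι] (w d : ι → R) {b : R}
    (hb : ∃ i, d i = b) :
    ∃ H : R[X], secularPoly w d = (X - C b) ^ (#{j | d j = b} - 1) * H ∧
      H.eval b = (∑ i with d i = b, w i) * ∏ j with d j ≠ b, (b - d j) := by
  set S : Finset ι := {j | d j = b}
  set T : Finset ι := {j | d j ≠ b}
  set Q : R[X] := ∏ j ∈ T, (X - C (d j))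
  obtain ⟨m, hm⟩ : ∃ m, #S = m + 1 := by
    obtain ⟨i, hi⟩ := hb
    exact Nat.exists_eq_succ_of_ne_zero (card_ne_zero_of_mem (mem_filter.2 ⟨mem_univ i, hi⟩))
  have herase : ∀ i, ∏ j ∈ univ.erase i, (X - C (d j))
      = (X - C b) ^ #(S.erase i) * ∏ j ∈ T.erase i, (X - C (d j)) := fun i => by
    rw [prod_X_sub_C_eq_X_sub_C_pow_mul _ d b, filter_erase, filter_erase]
  have hin : ∀ i ∈ S, ∏ j ∈ univ.erase i, (X - C (d j)) = (X - C b) ^ m * Q := fun i hi => by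
    rw [herase, card_erase_of_mem hi, hm, Nat.add_sub_cancel,
      erase_eq_of_notMem (by simpa [S, T] using hi)]
  have hout : ∀ i ∈ T, ∏ j ∈ univ.erase i, (X - C (d j))
      = (X - C b) ^ (m + 1) * ∏ j ∈ T.erase i, (X - C (d j)) := fun i hi => by
    rw [herase, erase_eq_of_notMem (by simpa [S, T] using hi), hm]
  have hsumS : ∑ i ∈ S, C (w i) * ∏ j ∈ univ.erase i, (X - C (d j))
      = C (∑ i ∈ S, w i) * ((X - C b) ^ m * Q) := by
    rw [map_sum, sum_mul]
    exact sum_congr rfl fun i hi => by rw [hin i hi]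
  have hsumT : ∑ i ∈ T, C (w i) * ∏ j ∈ univ.erase i, (X - C (d j))
      = (X - C b) ^ (m + 1) * ∑ i ∈ T, C (w i) * ∏ j ∈ T.erase i, (X - C (d j)) := by
    rw [mul_sum]
    exact sum_congr rfl fun i hi => by rw [hout i hi]; ring
  refine ⟨(X - C b + C (∑ i ∈ S, w i)) * Q
      + (X - C b) * ∑ i ∈ T, C (w i) * ∏ j ∈ T.erase i, (X - C (d j)), ?_,
    by simp [Q, eval_prod, eval_finsetSum]⟩
  rw [secularPoly, ← sum_filter_add_sum_filter_not univ (fun i => d i = b), hsumS, hsumT,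
    prod_X_sub_C_eq_X_sub_C_pow_mul univ d b, hm, Nat.add_sub_cancel]
  ring

end Polynomial

section OrderedRing

variable {ι R : Type*} [CommRing R] [LinearOrder R] [IsStrictOrderedRing R]

theorem neg_one_pow_card_mul_prod_sub_pos [Fintype ι] (x : ι → R) (b : R) :
    0 < (-1) ^ #{i | b < x i} * ∏ i with x i ≠ b, (b - x i) := by
  have hfilter :
      ({i | x i ≠ b} : Finset ι).filter (fun i => b < x i) = ({i | b < x i} : Finset ι) := by
    rw [filter_filter]
    exact filter_congr fun i _ => and_iff_right_of_imp fun (h : b < x i) => h.ne'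
  calc 0 < ∏ i with x i ≠ b, |b - x i| :=
        prod_pos fun i hi => abs_pos.2 (sub_ne_zero.2 (mem_filter.1 hi).2.symm)
    _ = ∏ i with x i ≠ b, ((if b < x i then -1 else 1) * (b - x i)) :=
        prod_congr rfl fun i _ => by
          split_ifs with h
          · rw [abs_of_neg (by linarith), neg_one_mul]
          · rw [abs_of_nonneg (by linarith), one_mul]
    _ = (-1) ^ #{i | b < x i} * ∏ i with x i ≠ b, (b - x i) := by
        rw [prod_mul_distrib, prod_ite, prod_const, prod_const_one, mul_one, hfilter]

theorem mod_two_eq_of_neg_one_pow_mul_pos {a c : ℕ} {u : R} (ha : 0 < (-1) ^ a * u)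
    (hc : 0 < (-1) ^ c * u) : a % 2 = c % 2 := by
  rw [neg_one_pow_eq_pow_mod_two] at ha hc
  rcases Nat.mod_two_eq_zero_or_one a with h | h <;>
    rcases Nat.mod_two_eq_zero_or_one c with h' | h' <;>
    simp only [h, h', pow_zero, pow_one, one_mul, neg_one_mul] at ha hc ⊢ <;> linarith

theorem card_eq_and_card_gt_mod_two_of_prod_eq_secularPoly [Fintype ι] [DecidableEq ι]
    {w d x : ι → R} (hw : ∀ i, 0 < w i) (hx : ∏ i, (X - C (x i)) = secularPoly w d) {b : R}
    (hb : ∃ i, d i = b) :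
    #{i | x i = b} + 1 = #{i | d i = b} ∧ #{i | b < x i} % 2 = #{i | b < d i} % 2 := by
  obtain ⟨H, hH, hHb⟩ := secularPoly_eq_X_sub_C_pow_mul w d hb
  have hne : ({i | d i = b} : Finset ι).Nonempty :=
    hb.imp fun i hi => mem_filter.2 ⟨mem_univ i, hi⟩
  have hW : 0 < ∑ i with d i = b, w i := sum_pos (fun i _ => hw i) hne
  have hd := neg_one_pow_card_mul_prod_sub_pos d b
  have hHroot : ¬H.IsRoot b := by
    rw [IsRoot.def, hHb]
    exact mul_ne_zero hW.ne' (right_ne_zero_of_mul hd.ne')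
  obtain ⟨hcard, hprod⟩ := card_eq_and_prod_eq_of_prod_X_sub_C_eq hHroot (hx.trans hH)
  refine ⟨by have := hne.card_pos; omega, mod_two_eq_of_neg_one_pow_mul_pos ?_ hd⟩
  have hsign := neg_one_pow_card_mul_prod_sub_pos x b
  rw [hprod, hHb, mul_left_comm] at hsign
  exact pos_of_mul_pos_right hsign hW.le

end OrderedRing

section Counting

variable {ι α : Type*} [Fintype ι] [LinearOrder α]

theorem card_lt_add_card_eq_add_card_gt (x : ι → α) (b : α) :
    #{i | x i < b} + #{i | x i = b} + #{i | b < x i} = Fintype.card ι := by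
  simp only [card_filter, ← sum_add_distrib]
  rw [← card_univ, card_eq_sum_ones]
  refine sum_congr rfl fun i _ => ?_
  rcases lt_trichotomy (x i) b with h | h | h
  · simp [h, h.ne, h.not_gt]
  · simp [h]
  · simp [h, h.ne', h.not_gt]

theorem card_add_card_between_eq (x : ι → α) {b b' : α} (h : b < b') :
    Fintype.card ι + #{i | b < x i ∧ x i < b'} = #{i | x i < b'} + #{i | b < x i} := by
  classical
  have hunion : univ.filter (fun i => x i < b') ∪ univ.filter (fun i => b < x i) = univ :=
    eq_univ_of_forall fun i => by
      rcases lt_or_ge (x i) b' with h' | h'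
      · simp [h']
      · simp [h.trans_le h']
  have hinter : univ.filter (fun i => x i < b') ∩ univ.filter (fun i => b < x i)
      = univ.filter (fun i => b < x i ∧ x i < b') := by
    ext i
    simp [and_comm]
  rw [← card_union_add_card_inter, hunion, hinter, card_univ]

end Counting

section Monotone

variable {n : ℕ} {α : Type*} [LinearOrder α] {f : Fin n → α}

theorem Monotone.card_lt_apply_le (hf : Monotone f) (i : Fin n) : #{k | f k < f i} ≤ i := by
  calc #{k | f k < f i} ≤ #(Iio i) :=
        card_le_card fun k hk =>
          mem_Iio.2 (lt_of_not_ge fun hik => (mem_filter.1 hk).2.not_ge (hf hik))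
    _ = i := Fin.card_Iio i

theorem Monotone.card_apply_lt_le (hf : Monotone f) (i : Fin n) : #{k | f i < f k} ≤ n - 1 - i := by
  calc #{k | f i < f k} ≤ #(Ioi i) :=
        card_le_card fun k hk =>
          mem_Ioi.2 (lt_of_not_ge fun hki => (mem_filter.1 hk).2.not_ge (hf hki))
    _ = n - 1 - i := Fin.card_Ioi i

theorem Monotone.le_card_lt_of_apply_lt (hf : Monotone f) {i : Fin n} {b : α} (h : f i < b) :
    i + 1 ≤ #{k | f k < b} := by
  calc i + 1 = #(Iic i) := (Fin.card_Iic i).symm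
    _ ≤ #{k | f k < b} :=
        card_le_card fun k hk => mem_filter.2 ⟨mem_univ k, (hf (mem_Iic.1 hk)).trans_lt h⟩

theorem Monotone.le_card_gt_of_lt_apply (hf : Monotone f) {i : Fin n} {b : α} (h : b < f i) :
    n - i ≤ #{k | b < f k} := by
  calc n - i = #(Ici i) := (Fin.card_Ici i).symm
    _ ≤ #{k | b < f k} :=
        card_le_card fun k hk => mem_filter.2 ⟨mem_univ k, h.trans_le (hf (mem_Ici.1 hk))⟩

theorem Monotone.card_between_castSucc_succ {f : Fin (n + 1) → α} (hf : Monotone f) (i : Fin n) :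
    #{k | f i.castSucc < f k ∧ f k < f i.succ} = 0 := by
  refine card_eq_zero.2 (filter_eq_empty_iff.2 fun k _ hk => ?_)
  rcases le_or_gt k i.castSucc with hki | hki
  · exact hk.1.not_ge (hf hki)
  · exact hk.2.not_ge (hf (Fin.castSucc_lt_iff_succ_le.1 hki))

end Monotone

section Interlacing

variable {n : ℕ} {α : Type*} [LinearOrder α] {x y : Fin n → α}

theorem card_gt_le_card_gt (hy : Monotone y)
    (hE : ∀ i, #{k | x k = y i} + 1 = #{k | y k = y i})
    (hP : ∀ i, #{k | y i < x k} % 2 = #{k | y i < y k} % 2) (i : Fin n) :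
    #{k | y i < y k} ≤ #{k | y i < x k} := by
  obtain ⟨m, rfl⟩ : ∃ m, n = m + 1 := ⟨n - 1, by have := i.pos; omega⟩
  induction i using Fin.reverseInduction with
  | last =>
    have := hy.card_apply_lt_le (Fin.last m)
    simp only [Fin.val_last] at this
    omega
  | cast i ih =>
    rcases (hy (Fin.castSucc_le_succ i)).eq_or_lt with heq | hlt
    · rwa [heq]
    -- By parity, the gap between consecutive values `y i.castSucc < y i.succ` contains an `x`.
    have := card_add_card_between_eq x hlt
    have := card_add_card_between_eq y hlt
    have := hy.card_between_castSucc_succ i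
    have := card_lt_add_card_eq_add_card_gt x (y i.succ)
    have := card_lt_add_card_eq_add_card_gt y (y i.succ)
    have := hE i.succ
    have := hP i.castSucc
    simp only [Fintype.card_fin] at *
    omega

theorem card_lt_add_one_le_card_lt (hy : Monotone y)
    (hE : ∀ i, #{k | x k = y i} + 1 = #{k | y k = y i})
    (hP : ∀ i, #{k | y i < x k} % 2 = #{k | y i < y k} % 2) (hlow : ∃ k, ∀ i, x k < y i)
    (i : Fin n) : #{k | y k < y i} + 1 ≤ #{k | x k < y i} := by
  obtain ⟨m, rfl⟩ : ∃ m, n = m + 1 := ⟨n - 1, by have := i.pos; omega⟩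
  induction i using Fin.induction with
  | zero =>
    obtain ⟨k, hk⟩ := hlow
    have := hy.card_lt_apply_le 0
    have : 0 < #{k | x k < y 0} := card_pos.2 ⟨k, mem_filter.2 ⟨mem_univ k, hk 0⟩⟩
    simp only [Fin.val_zero] at *
    omega
  | succ i ih =>
    rcases (hy (Fin.castSucc_le_succ i)).eq_or_lt with heq | hlt
    · rwa [← heq]
    have := card_add_card_between_eq x hlt
    have := card_add_card_between_eq y hlt
    have := hy.card_between_castSucc_succ i
    have := card_lt_add_card_eq_add_card_gt x (y i.castSucc)
    have := card_lt_add_card_eq_add_card_gt y (y i.castSucc)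
    have := card_lt_add_card_eq_add_card_gt x (y i.succ)
    have := card_lt_add_card_eq_add_card_gt y (y i.succ)
    have := hE i.castSucc
    have := hE i.succ
    have := hP i.succ
    simp only [Fintype.card_fin] at *
    omega

theorem card_gt_eq_and_card_lt_eq (hy : Monotone y)
    (hE : ∀ i, #{k | x k = y i} + 1 = #{k | y k = y i})
    (hP : ∀ i, #{k | y i < x k} % 2 = #{k | y i < y k} % 2) (hlow : ∃ k, ∀ i, x k < y i)
    (i : Fin n) :
    #{k | y i < x k} = #{k | y i < y k} ∧ #{k | x k < y i} = #{k | y k < y i} + 1 := by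
  have := card_gt_le_card_gt hy hE hP i
  have := card_lt_add_one_le_card_lt hy hE hP hlow i
  have := card_lt_add_card_eq_add_card_gt x (y i)
  have := card_lt_add_card_eq_add_card_gt y (y i)
  have := hE i
  omega

theorem interlace_of_card_eq (hx : Monotone x) (hy : Monotone y)
    (hcount : ∀ i, #{k | y i < x k} = #{k | y i < y k} ∧ #{k | x k < y i} = #{k | y k < y i} + 1) :
    (∀ i, x i ≤ y i) ∧ ∀ i j : Fin n, (i : ℕ) + 1 = j → y i ≤ x j := by
  refine ⟨fun i => ?_, fun i j hij => ?_⟩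
  · by_contra! h
    have := hx.le_card_gt_of_lt_apply h
    have := hy.card_apply_lt_le i
    have := (hcount i).1
    omega
  · by_contra! h
    have := hx.le_card_lt_of_apply_lt h
    have := hy.card_lt_apply_le i
    have := (hcount i).2
    omega

end Interlacing

theorem stmt19 (n : ℕ) (hn : 0 < n) (α β : Fin n → ℝ)
    (hα : ∀ i, 0 < α i) (hβ : ∀ i, 0 < β i ∧ β i < 1) (hβmono : Monotone β)
    (A₂ : Matrix (Fin n) (Fin n) ℝ)
    (hA₂ : A₂ = Matrix.diagonal β - (∑ j, α j)⁻¹ • Matrix.vecMulVec α β)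
    (ξ : Fin n → ℝ) (hξmono : Monotone ξ)
    (hspec : A₂.charpoly = ∏ i, (Polynomial.X - Polynomial.C (ξ i))) :
    (∀ i : Fin n, ξ i ≤ β i) ∧
    (∀ i j : Fin n, (i : ℕ) + 1 = (j : ℕ) → β i ≤ ξ j) ∧
    ξ ⟨0, hn⟩ = 0 := by
  have hs : 0 < ∑ j, α j := sum_pos (fun i _ => hα i) ⟨⟨0, hn⟩, mem_univ _⟩
  have hsecular : ∏ i, (X - C (ξ i)) = secularPoly ((∑ j, α j)⁻¹ • α * β) β := by
    rw [← hspec, hA₂, ← smul_vecMulVec, charpoly_diagonal_sub_vecMulVec]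
  have hw : ∀ i, 0 < ((∑ j, α j)⁻¹ • α * β) i := fun i =>
    mul_pos (mul_pos (inv_pos.2 hs) (hα i)) (hβ i).1
  obtain ⟨k, hk⟩ := exists_eq_zero_of_charpoly_eq_prod
    (hA₂ ▸ det_diagonal_sub_inv_sum_smul_vecMulVec hs.ne') hspec
  have hcount := card_gt_eq_and_card_lt_eq hβmono
    (fun i => (card_eq_and_card_gt_mod_two_of_prod_eq_secularPoly hw hsecular ⟨i, rfl⟩).1)
    (fun i => (card_eq_and_card_gt_mod_two_of_prod_eq_secularPoly hw hsecular ⟨i, rfl⟩).2)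
    ⟨k, fun i => hk ▸ (hβ i).1⟩
  obtain ⟨hle, hge⟩ := interlace_of_card_eq hξmono hβmono hcount
  refine ⟨hle, hge, ?_⟩
  -- Exactly one eigenvalue lies below `β 0`, and `ξ k = 0` is one, so `k = 0`.
  have := hξmono.le_card_lt_of_apply_lt (hk ▸ (hβ ⟨0, hn⟩).1 : ξ k < β ⟨0, hn⟩)
  have := hβmono.card_lt_apply_le ⟨0, hn⟩
  have := (hcount ⟨0, hn⟩).2
  have hk0 : k = ⟨0, hn⟩ := Fin.ext (by simp only at *; omega)
  rw [← hk0, hk]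
end
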